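/- The number of strict local maxima of the truncated function Ψ_τ(a) = max(Q(s,a), τ) is monotonically non-increasing in the threshold τ: if τ ≤ τ' then the set of strict local maxima of Ψ_{τ'} is a subset of the set of strict local maxima of Ψ_τ union possibly fewer points, so its cardinality is at most that of Ψ_τ's strict local maxima set. -/
import Mathlib

/-- A strict local maximum of `f` at `a'`. -/
def IsStrictLocalMaxPt {A : Type*} [TopologicalSpace A] (f : A → ℝ) (a' : A) : Prop :=
  ∃ U ∈ nhds a', ∀ a ∈ U, a ≠ a' → f a < f a'

/-- The number of strict local maxima of the truncation `Ψ_τ(a) = max (Q a) τ` is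
monotonically non-increasing in the threshold `τ`. -/
theorem stmt_3 {A : Type*} [TopologicalSpace A] (Q : A → ℝ) (τ τ' : ℝ) (hτ : τ ≤ τ')
    (hfin : {a' : A | IsStrictLocalMaxPt (fun a => max (Q a) τ) a'}.Finite)
    (hfin' : {a' : A | IsStrictLocalMaxPt (fun a => max (Q a) τ') a'}.Finite) :
    {a' : A | IsStrictLocalMaxPt (fun a => max (Q a) τ') a'}.ncard ≤
      {a' : A | IsStrictLocalMaxPt (fun a => max (Q a) τ) a'}.ncard := by
  apply Set.ncard_le_ncard _ hfin
  intro a' ha'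
  obtain ⟨U, hU, h⟩ := ha'
  refine ⟨U, hU, fun a ha hne => ?_⟩
  have h1 := h a ha hne
  simp only at h1 ⊢
  have h2 : τ' < max (Q a') τ' := lt_of_le_of_lt (le_max_right _ _) h1
  have hQ : τ' < Q a' := by
    rcases max_cases (Q a') τ' with ⟨he, _⟩ | ⟨he, _⟩ <;> linarith [he ▸ h2]
  have : max (Q a') τ = Q a' := max_eq_left (by linarith)
  rw [this]
  calc max (Q a) τ ≤ max (Q a) τ' := max_le_max le_rfl hτ
    _ < max (Q a') τ' := h1
    _ = Q a' := max_eq_left hQ.le
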